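/- arXiv:1404.6064 — 3 statements merged into one kernel-verified Lean document; each statement's English description precedes it below -/
import Mathlib

section
/- The shuffle of two regular languages of finite words is regular. -/
/-- The shuffle of two finite words, defined inductively:
`ε ⧢ w = w ⧢ ε = {w}` and `(a·w) ⧢ (a'·w') = a·(w ⧢ a'·w') ∪ a'·(a·w ⧢ w')`. -/
def shuffle {α : Type*} : List α → List α → Set (List α)
  | [], w => {w}
  | w, [] => {w}
  | a :: w, b :: w' =>
      (List.cons a '' shuffle w (b :: w')) ∪ (List.cons b '' shuffle (a :: w) w')
termination_by w w' => w.length + w'.length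


/-- The shuffle of two languages. -/
def langShuffle {α : Type*} (L L' : Language α) : Language α :=
  ⋃ (w ∈ L) (w' ∈ L'), shuffle w w'

lemma shuffle_nil_left {α : Type*} (w : List α) : shuffle [] w = {w} := by
  cases w <;> simp [shuffle]

lemma shuffle_nil_right {α : Type*} (w : List α) : shuffle w [] = {w} := by
  cases w <;> simp [shuffle]

lemma shuffle_cons_cons {α : Type*} (a b : α) (w w' : List α) :
    shuffle (a :: w) (b :: w') =
      (List.cons a '' shuffle w (b :: w')) ∪ (List.cons b '' shuffle (a :: w) w') := by
  rw [shuffle]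

lemma nil_mem_shuffle {α : Type*} {w w' : List α} (h : ([] : List α) ∈ shuffle w w') :
    w = [] ∧ w' = [] := by
  cases w with
  | nil => rw [shuffle_nil_left] at h; exact ⟨rfl, h.symm⟩
  | cons a w =>
    cases w' with
    | nil => rw [shuffle_nil_right] at h; exact absurd h.symm (by simp)
    | cons b w' =>
      rw [shuffle_cons_cons] at h
      rcases h with ⟨x, _, hx⟩ | ⟨x, _, hx⟩ <;> simp at hx

lemma cons_mem_shuffle_left {α : Type*} {a : α} {x w w' : List α}
    (h : x ∈ shuffle w w') : a :: x ∈ shuffle (a :: w) w' := by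
  cases w' with
  | nil =>
    rw [shuffle_nil_right] at h ⊢; simp_all
  | cons b w' =>
    rw [shuffle_cons_cons]
    exact Or.inl ⟨x, h, rfl⟩

lemma cons_mem_shuffle_right {α : Type*} {a : α} {x w w' : List α}
    (h : x ∈ shuffle w w') : a :: x ∈ shuffle w (a :: w') := by
  cases w with
  | nil =>
    rw [shuffle_nil_left] at h ⊢; simp_all
  | cons b w =>
    rw [shuffle_cons_cons]
    exact Or.inr ⟨x, h, rfl⟩

lemma cons_mem_shuffle {α : Type*} {a : α} {x w w' : List α}
    (h : a :: x ∈ shuffle w w') :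
    (∃ w₀, w = a :: w₀ ∧ x ∈ shuffle w₀ w') ∨
    (∃ w₀, w' = a :: w₀ ∧ x ∈ shuffle w w₀) := by
  cases w with
  | nil =>
    rw [shuffle_nil_left] at h
    refine Or.inr ⟨x, h.symm, ?_⟩
    rw [shuffle_nil_left]; rfl
  | cons c w =>
    cases w' with
    | nil =>
      rw [shuffle_nil_right] at h
      obtain ⟨rfl, rfl⟩ : c = a ∧ w = x := by simpa using h.symm
      refine Or.inl ⟨_, rfl, ?_⟩
      rw [shuffle_nil_right]; rfl
    | cons b w' =>
      rw [shuffle_cons_cons] at h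
      rcases h with ⟨y, hy, hyx⟩ | ⟨y, hy, hyx⟩
      · obtain ⟨rfl, rfl⟩ : c = a ∧ y = x := by simpa using hyx
        exact Or.inl ⟨w, rfl, hy⟩
      · obtain ⟨rfl, rfl⟩ : b = a ∧ y = x := by simpa using hyx
        exact Or.inr ⟨w', rfl, hy⟩

/-- The shuffle NFA of two DFAs. -/
def shuffleNFA {α σ τ : Type*} (M : DFA α σ) (N : DFA α τ) : NFA α (σ × τ) where
  step p a := {(M.step p.1 a, p.2), (p.1, N.step p.2 a)}
  start := {(M.start, N.start)}
  accept := {p | p.1 ∈ M.accept ∧ p.2 ∈ N.accept}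

lemma stepSet_union {α σ : Type*} (P : NFA α σ) (S T : Set σ) (c : α) :
    P.stepSet (S ∪ T) c = P.stepSet S c ∪ P.stepSet T c := by
  ext u
  simp only [NFA.mem_stepSet, Set.mem_union]
  constructor
  · rintro ⟨v, hv | hv, hu⟩
    · exact Or.inl ⟨v, hv, hu⟩
    · exact Or.inr ⟨v, hv, hu⟩
  · rintro (⟨v, hv, hu⟩ | ⟨v, hv, hu⟩)
    · exact ⟨v, Or.inl hv, hu⟩
    · exact ⟨v, Or.inr hv, hu⟩

lemma evalFrom_union {α σ : Type*} (P : NFA α σ) (x : List α) :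
    ∀ S T : Set σ, P.evalFrom (S ∪ T) x = P.evalFrom S x ∪ P.evalFrom T x := by
  induction x with
  | nil => intro S T; rfl
  | cons a x ih =>
    intro S T
    show List.foldl _ _ (a :: x) = _
    rw [List.foldl_cons, stepSet_union]
    exact ih _ _

lemma shuffleNFA_evalFrom {α σ τ : Type*} (M : DFA α σ) (N : DFA α τ)
    (x : List α) : ∀ (p : σ) (q : τ) (s : σ) (t : τ),
    (s, t) ∈ (shuffleNFA M N).evalFrom {(p, q)} x ↔
      ∃ w w', x ∈ shuffle w w' ∧ M.evalFrom p w = s ∧ N.evalFrom q w' = t := by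
  induction x with
  | nil =>
    intro p q s t
    rw [NFA.evalFrom_nil]
    constructor
    · intro h
      simp only [Set.mem_singleton_iff, Prod.mk.injEq] at h
      obtain ⟨rfl, rfl⟩ := h
      exact ⟨[], [], by rw [shuffle_nil_left]; exact ⟨rfl, rfl, rfl⟩⟩
    · rintro ⟨w, w', hmem, rfl, rfl⟩
      obtain ⟨rfl, rfl⟩ := nil_mem_shuffle hmem
      rfl
  | cons a x ih =>
    intro p q s t
    have hstep : (shuffleNFA M N).stepSet {(p, q)} a
        = ({(M.step p a, q)} : Set (σ × τ)) ∪ {(p, N.step q a)} := by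
      ext u
      simp only [NFA.mem_stepSet, Set.mem_singleton_iff, Set.mem_union]
      constructor
      · rintro ⟨v, rfl, hu⟩
        simpa [shuffleNFA] using hu
      · rintro (rfl | rfl)
        · exact ⟨(p, q), rfl, by simp [shuffleNFA]⟩
        · exact ⟨(p, q), rfl, by simp [shuffleNFA]⟩
    have hsplit : (shuffleNFA M N).evalFrom {(p, q)} (a :: x)
        = (shuffleNFA M N).evalFrom {(M.step p a, q)} x
          ∪ (shuffleNFA M N).evalFrom {(p, N.step q a)} x := by
      show List.foldl _ _ (a :: x) = _
      rw [List.foldl_cons, hstep]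
      exact evalFrom_union _ _ _ _
    rw [hsplit]
    constructor
    · rintro (h | h)
      · obtain ⟨w, w', hmem, hs, ht⟩ := (ih _ _ s t).1 h
        exact ⟨a :: w, w', cons_mem_shuffle_left hmem, hs, ht⟩
      · obtain ⟨w, w', hmem, hs, ht⟩ := (ih _ _ s t).1 h
        exact ⟨w, a :: w', cons_mem_shuffle_right hmem, hs, ht⟩
    · rintro ⟨w, w', hmem, hs, ht⟩
      rcases cons_mem_shuffle hmem with ⟨w₀, rfl, hmem'⟩ | ⟨w₀, rfl, hmem'⟩
      · exact Or.inl ((ih _ _ s t).2 ⟨w₀, w', hmem', hs, ht⟩)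
      · exact Or.inr ((ih _ _ s t).2 ⟨w, w₀, hmem', hs, ht⟩)

lemma shuffleNFA_accepts {α σ τ : Type*} (M : DFA α σ) (N : DFA α τ) :
    (shuffleNFA M N).accepts = langShuffle M.accepts N.accepts := by
  ext x
  rw [NFA.mem_accepts]
  constructor
  · rintro ⟨⟨s, t⟩, ⟨hs, ht⟩, hmem⟩
    have hmem2 : (s, t) ∈ (shuffleNFA M N).evalFrom {(M.start, N.start)} x := hmem
    obtain ⟨w, w', hsh, rfl, rfl⟩ := (shuffleNFA_evalFrom M N x _ _ s t).1 hmem2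
    exact Set.mem_iUnion₂.2 ⟨w, hs, Set.mem_iUnion₂.2 ⟨w', ht, hsh⟩⟩
  · intro hx
    obtain ⟨w, hw, hx⟩ := Set.mem_iUnion₂.1 hx
    obtain ⟨w', hw', hx⟩ := Set.mem_iUnion₂.1 hx
    refine ⟨(M.evalFrom M.start w, N.evalFrom N.start w'), ⟨hw, hw'⟩, ?_⟩
    exact (shuffleNFA_evalFrom M N x _ _ _ _).2 ⟨w, w', hx, rfl, rfl⟩

/-- The shuffle of two regular languages is regular. -/
theorem isRegular_langShuffle {α : Type*} (L L' : Language α)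
    (hL : L.IsRegular) (hL' : L'.IsRegular) :
    (langShuffle L L').IsRegular := by
  obtain ⟨σ, _, M, rfl⟩ := hL
  obtain ⟨τ, _, N, rfl⟩ := hL'
  refine ⟨Set (σ × τ), Set.fintype, (shuffleNFA M N).toDFA, ?_⟩
  rw [NFA.toDFA_correct, shuffleNFA_accepts]
end

section
/- If ⪯ is a well-quasi-ordering on a set C, then the induced ordering ⪯_m on finite multisets over C is a well-quasi-ordering, where B ⪯_m B' iff there is an injection h from the elements of B (with multiplicity) into the elements of B' such that each element is mapped to a ⪯-larger element. -/
/-- A relation is a well-quasi-ordering if it is a preorder (reflexive and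
transitive) and every infinite sequence has indices `i < j` with
`r (f i) (f j)`. -/
def IsWQO {α : Type*} (r : α → α → Prop) : Prop :=
  Reflexive r ∧ Transitive r ∧ ∀ f : ℕ → α, ∃ i j, i < j ∧ r (f i) (f j)

/-- The multiset embedding: `B ⪯_m B'` iff there is an injection of the elements
of `B` (with multiplicity) into those of `B'` mapping each element to an
`r`-larger one; equivalently, some sub-multiset of `B'` is related to `B`
elementwise by `r`. -/
def MultisetEmb {α : Type*} (r : α → α → Prop) (B B' : Multiset α) : Prop :=
  ∃ t ≤ B', Multiset.Rel r B t

/-!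
The preorder axioms pass from `r` to the multiset embedding (for transitivity, compose the two
sub-multiset selections). For the sequence condition, list the elements of each multiset in any
order: by Higman's lemma lists under "pointwise `r`-dominated by a sublist" form a WQO, and that
relation maps onto the multiset embedding along the surjection `List α → Multiset α`.
-/

theorem List.Forall₂.rel_coe {α β : Type*} {r : α → β → Prop} :
    ∀ {l₁ : List α} {l₂ : List β}, List.Forall₂ r l₁ l₂ → Multiset.Rel r l₁ l₂
  | _, _, .nil => .zero
  | _, _, .cons hab h => .cons hab h.rel_coe

theorem WellQuasiOrdered.sublistForall₂ {α : Type*} {r : α → α → Prop} [IsPreorder α r]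
    (h : WellQuasiOrdered r) : WellQuasiOrdered (List.SublistForall₂ r) := by
  have := (Set.partiallyWellOrderedOn_univ_iff.mpr h).partiallyWellOrderedOn_sublistForall₂ r
  exact Set.partiallyWellOrderedOn_univ_iff.mp (this.mono fun _ _ _ _ => trivial)

section MultisetEmb

variable {α : Type*} {r : α → α → Prop}

theorem List.SublistForall₂.multisetEmb {l₁ l₂ : List α} (h : List.SublistForall₂ r l₁ l₂) :
    MultisetEmb r l₁ l₂ :=
  let ⟨l, hrel, hsub⟩ := List.sublistForall₂_iff.mp h
  ⟨l, Multiset.coe_le.mpr hsub.subperm, hrel.rel_coe⟩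

instance [Std.Refl r] : Std.Refl (MultisetEmb r) where
  refl B := ⟨B, le_rfl, Multiset.rel_refl_of_refl_on fun x _ => refl x⟩

instance [IsTrans α r] : IsTrans (Multiset α) (MultisetEmb r) where
  trans := by
    rintro B₁ B₂ B₃ ⟨t₁, ht₁, hB₁⟩ ⟨t₂, ht₂, hB₂⟩
    obtain ⟨c, rfl⟩ := Multiset.le_iff_exists_add.mp ht₁
    obtain ⟨s, u, hs, -, rfl⟩ := Multiset.rel_add_left.mp hB₂
    exact ⟨s, (Multiset.le_add_right s _).trans ht₂, hB₁.trans r hs⟩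

theorem WellQuasiOrdered.multisetEmb [IsPreorder α r] (h : WellQuasiOrdered r) :
    WellQuasiOrdered (MultisetEmb r) :=
  h.sublistForall₂.of_surjective ⟨((↑) : List α → Multiset α), List.SublistForall₂.multisetEmb⟩
    Quot.mk_surjective

end MultisetEmb

/-- If `r` is a WQO then the multiset embedding `r`-ordering is a WQO. -/
theorem isWQO_multisetEmb {α : Type*} (r : α → α → Prop) (h : IsWQO r) :
    IsWQO (MultisetEmb r) := by
  obtain ⟨hr, ht, hwqo⟩ := h
  have : IsPreorder α r := { refl := hr, trans := fun _ _ _ => @ht _ _ _ }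
  exact ⟨refl_of _, fun _ _ _ => trans_of _, WellQuasiOrdered.multisetEmb hwqo⟩
end

section
/- In a k-nested multi-counter system, the transition relation → on configurations is monotonic with respect to the nested multiset well-quasi-order ⪯_1: if c_1 ⪯_1 c_2 and c_1 → c_3, then there exists c_4 with c_2 → c_4 and c_3 ⪯_1 c_4. -/
/-- Configurations of level `k - n` of a `k`-nested multi-counter system:
`Conf Q 0 = Q` and `Conf Q (n+1) = Q × (finite multisets over Conf Q n)`;
the configurations `C_0` of the system are `Conf Q k`. -/
def Conf (Q : Type) : ℕ → Type
  | 0 => Q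
  | n + 1 => Q × Multiset (Conf Q n)

/-- The nested multiset well-quasi-order `⪯_1` on configurations, obtained from
equality on `Q` by iterating the product and multiset-embedding constructions. -/
def confLe {Q : Type} : ∀ n, Conf Q n → Conf Q n → Prop
  | 0, q, q' => q = q'
  | n + 1, c, c' => c.1 = c'.1 ∧ MultisetEmb (confLe n) c.2 c'.2

/-- `StateChain n qs c` holds iff `c` is the chain configuration
`q'_j(q'_{j+1}(⋯(q'_k)))` of level `n` built from the list `qs` of states. -/
def StateChain {Q : Type} : ∀ n, List Q → Conf Q n → Prop
  | 0, [q], c => c = q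
  | n + 1, q :: qs, c => c.1 = q ∧ ∃ c', StateChain n qs c' ∧ c.2 = {c'}
  | _, _, _ => False

/-- The rewrite step of a nested multi-counter system along a transition with
source tuple `qs` and target tuple `qs'`: a configuration
`(q_0, X_1 + q_1(X_2 + ⋯ q_i(X_{i+1})⋯))` is rewritten into
`(q'_0, X_1 + q'_1(X_2 + ⋯ q'_i(X_{i+1} + q'_{i+1}(⋯ q'_{k-1}(q'_k)))⋯))`. -/
def Step {Q : Type} : ∀ n, List Q → List Q → Conf Q n → Conf Q n → Prop
  | 0, [q], [q'], c, c' => c = q ∧ c' = q'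
  | n + 1, [q], q' :: rest, c, c' =>
      c.1 = q ∧ c'.1 = q' ∧ ∃ d, StateChain n rest d ∧ c'.2 = c.2 + {d}
  | n + 1, q₀ :: q₁ :: qs, q' :: rest, c, c' =>
      c.1 = q₀ ∧ c'.1 = q' ∧
        ∃ d d' X, Step n (q₁ :: qs) rest d d' ∧ c.2 = X + {d} ∧ c'.2 = X + {d'}
  | _, _, _, _, _ => False

/-- The transition relation of a `k`-nMCS with transition relation `δ`
(a set of pairs of a source tuple and a target tuple of states). -/
def StepM {Q : Type} (k : ℕ) (δ : Set (List Q × List Q))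
    (c c' : Conf Q k) : Prop :=
  ∃ t ∈ δ, Step k t.1 t.2 c c'

/-!
Induction on the nesting depth. A transition either appends a fresh chain to the multiset of
the root, which preserves any embedding since both sides grow by the same element, or rewrites
one child `d` of the root and recurses into it. In the latter case the embedding of `c₁` into
`c₂` matches `d` with a child `e` of `c₂` dominating it; the induction hypothesis rewrites `e`
along the same transition into a configuration dominating the rewritten `d`, and the remaining
children keep their embedding.
-/

namespace MultisetEmb

variable {α : Type*} {r : α → α → Prop}

theorem refl_of_forall (hr : ∀ a, r a a) (X : Multiset α) : MultisetEmb r X X :=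
  ⟨X, le_rfl, Multiset.rel_refl_of_refl_on fun a _ => hr a⟩

theorem add_singleton {X Y : Multiset α} {a b : α} (h : MultisetEmb r X Y) (hab : r a b) :
    MultisetEmb r (X + {a}) (Y + {b}) := by
  obtain ⟨t, ht, hrel⟩ := h
  exact ⟨t + {b}, add_le_add_left ht _, hrel.add (.cons hab .zero)⟩

theorem exists_eq_add_singleton_of_left {X B : Multiset α} {a : α}
    (h : MultisetEmb r (X + {a}) B) : ∃ b Y, r a b ∧ MultisetEmb r X Y ∧ B = Y + {b} := by
  classical
  obtain ⟨t, ht, hrel⟩ := h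
  rw [add_comm, Multiset.singleton_add, Multiset.rel_cons_left] at hrel
  obtain ⟨b, t', hab, hXt', rfl⟩ := hrel
  have hb : b ∈ B := Multiset.mem_of_le ht (Multiset.mem_cons_self b t')
  refine ⟨b, B.erase b, hab, ⟨t', ?_, hXt'⟩, ?_⟩
  · rwa [← Multiset.cons_le_cons_iff b, Multiset.cons_erase hb]
  · rw [add_comm, Multiset.singleton_add, Multiset.cons_erase hb]

end MultisetEmb

theorem confLe_refl {Q : Type} : ∀ n (c : Conf Q n), confLe n c c
  | 0, _ => rfl
  | n + 1, c => ⟨rfl, MultisetEmb.refl_of_forall (confLe_refl n) c.2⟩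

theorem Step.exists_of_confLe {Q : Type} :
    ∀ {n : ℕ} {qs qs' : List Q} {c₁ c₂ c₃ : Conf Q n},
      confLe n c₁ c₂ → Step n qs qs' c₁ c₃ → ∃ c₄, Step n qs qs' c₂ c₄ ∧ confLe n c₃ c₄
  | 0, [_], [q'], _, _, _, hle, ⟨h₁, h₃⟩ => ⟨q', ⟨hle ▸ h₁, rfl⟩, h₃⟩
  | n + 1, [_], q' :: _, _, c₂, _, ⟨hfst, hemb⟩, ⟨h₁, h₃, d, hd, hsum⟩ =>
    ⟨(q', c₂.2 + {d}), ⟨hfst ▸ h₁, rfl, d, hd, rfl⟩, h₃,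
      hsum ▸ hemb.add_singleton (confLe_refl n d)⟩
  | _ + 1, _ :: _ :: _, q' :: _, _, _, _, ⟨hfst, hemb⟩, ⟨h₁, h₃, _, d', _, hdd', hX, hX'⟩ => by
    rw [hX] at hemb
    obtain ⟨e, Y, hde, hXY, hY⟩ := hemb.exists_eq_add_singleton_of_left
    obtain ⟨e', hee', hd'e'⟩ := Step.exists_of_confLe hde hdd'
    exact ⟨(q', Y + {e'}), ⟨hfst ▸ h₁, rfl, e, e', Y, hee', hY, rfl⟩, h₃,
      hX' ▸ hXY.add_singleton hd'e'⟩
  | 0, [], _, _, _, _, _, h | 0, _ :: _ :: _, _, _, _, _, _, h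
  | 0, [_], [], _, _, _, _, h | 0, [_], _ :: _ :: _, _, _, _, _, h
  | _ + 1, [], _, _, _, _, _, h | _ + 1, [_], [], _, _, _, _, h
  | _ + 1, _ :: _ :: _, [], _, _, _, _, h => False.elim h

/-- The transition relation of a `k`-nested multi-counter system is monotonic
with respect to the nested multiset well-quasi-order `⪯_1`. -/
theorem stepM_monotone {Q : Type} (k : ℕ) (δ : Set (List Q × List Q))
    (c₁ c₂ c₃ : Conf Q k) (hle : confLe k c₁ c₂) (hstep : StepM k δ c₁ c₃) :
    ∃ c₄, StepM k δ c₂ c₄ ∧ confLe k c₃ c₄ := by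
  obtain ⟨t, ht, hstep⟩ := hstep
  obtain ⟨c₄, hstep', hle'⟩ := Step.exists_of_confLe hle hstep
  exact ⟨c₄, ⟨t, ht, hstep'⟩, hle'⟩
end
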